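/- Let L be a totally ordered normal incline and let A be a 3×3 completely positive matrix over L. Then A is either LU-completely positive or UL-completely positive (or both): there exists a 3×3 lower triangular matrix C over L with A = C * Cᵀ, or there exists a 3×3 upper triangular matrix U over L with A = U * Uᵀ. -/

import Mathlib

/-!
An incline with `0` and `1` is an idempotent commutative semiring in which `1` is the top element,
so adding to an entry a term it dominates does not change it.

Write `A = B * Bᵀ` and let `dᵢ` be the square root of `Aᵢᵢ`. By totality and uniqueness of square
roots, every entry in row `i` of `B` is at most `dᵢ`, hence `Aᵢⱼ ≤ dᵢ dⱼ`, and the LI-property gives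
`A₀₁ = d₀ d₁ z`, `A₀₂ = d₀ d₂ w`, `A₁₂ = d₁ d₂ s`. If `d₀ d₁ w s ≤ A₀₁`, the factor with rows
`(d₀, d₀ z, d₀ w)`, `(0, d₁, d₁ s)`, `(0, 0, d₂)` is upper triangular; otherwise `A₀₁ = d₀ d₁ w s k`
and the factor with rows `(d₀, 0, 0)`, `(d₁ w s k, d₁, 0)`, `(d₂ w, d₂ s, d₂)` is lower triangular.
-/

open Matrix Function

theorem Matrix.IsSymm.ext_fin_three {α : Type*} {A B : Matrix (Fin 3) (Fin 3) α} (hA : A.IsSymm)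
    (hB : B.IsSymm) (h₀₀ : A 0 0 = B 0 0) (h₀₁ : A 0 1 = B 0 1) (h₀₂ : A 0 2 = B 0 2)
    (h₁₁ : A 1 1 = B 1 1) (h₁₂ : A 1 2 = B 1 2) (h₂₂ : A 2 2 = B 2 2) : A = B := by
  ext i j
  fin_cases i <;> fin_cases j <;>
    first | assumption | (rw [← hA.apply, ← hB.apply]; assumption)

namespace Incline

variable {L : Type*} [IdemCommSemiring L]

theorem le_of_mul_self_le_mul_self (htot : ∀ x y : L, x ≤ y ∨ y ≤ x)
    (hinj : Injective fun x : L => x * x) {x y : L} (h : x * x ≤ y * y) : x ≤ y := by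
  rcases htot x y with hxy | hyx
  · exact hxy
  · exact (hinj (le_antisymm h (mul_le_mul' hyx hyx))).le

theorem mul_transpose_self_apply_le {n m : Type*} [Fintype m]
    (htot : ∀ x y : L, x ≤ y ∨ y ≤ x) (hinj : Injective fun x : L => x * x)
    (B : Matrix n m L) {d : n → L} (hd : ∀ i, d i * d i = (B * Bᵀ) i i) (i j : n) :
    (B * Bᵀ) i j ≤ d i * d j := by
  have hB : ∀ i k, B i k ≤ d i := fun i k => by
    refine le_of_mul_self_le_mul_self htot hinj ?_
    rw [hd, mul_apply]
    exact Finset.single_le_sum_of_canonicallyOrdered (f := fun k => B i k * Bᵀ k i)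
      (Finset.mem_univ k)
  rw [mul_apply]
  exact Finset.sum_induction _ (· ≤ d i * d j) (fun _ _ => add_le) zero_le
    fun k _ => mul_le_mul' (hB i k) (hB j k)

section ThreeByThree

variable (hle_one : ∀ a : L, a ≤ 1)
include hle_one

theorem add_mul_eq_left (a b : L) : a + a * b = a :=
  add_eq_left_iff_le.2 (mul_le_of_le_one_right' (hle_one b))

variable {A : Matrix (Fin 3) (Fin 3) L} (hA : A.IsSymm) {d : Fin 3 → L}
  (hd : ∀ i, d i * d i = A i i) {w s : L} (hw : A 0 2 = d 0 * d 2 * w)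
  (hs : A 1 2 = d 1 * d 2 * s)
include hA hd hw hs

theorem exists_upper_triangular_eq_mul_transpose {z : L} (hz : A 0 1 = d 0 * d 1 * z)
    (h : d 0 * d 1 * (w * s) ≤ A 0 1) :
    ∃ U : Matrix (Fin 3) (Fin 3) L, (∀ i j : Fin 3, j < i → U i j = 0) ∧ A = U * Uᵀ := by
  let U := !![d 0, d 0 * z, d 0 * w; 0, d 1, d 1 * s; 0, 0, d 2]
  refine ⟨U, ?_, hA.ext_fin_three (isSymm_mul_transpose_self U) ?_ ?_ ?_ ?_ ?_ ?_⟩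
  · intro i j hij
    fin_cases i <;> fin_cases j <;> first | rfl | exact absurd hij (by decide)
  all_goals simp only [U, mul_apply, transpose_apply, Fin.sum_univ_three, of_apply, cons_val',
      cons_val_fin_one, cons_val, cons_val_zero, cons_val_one, Fin.isValue, mul_zero, add_zero,
      zero_add]
  · rw [← hd 0]
    exact (add_mul_eq_left hle_one _ (z * z + w * w)).symm.trans (by ring)
  · calc A 0 1 = A 0 1 + d 0 * d 1 * (w * s) := (add_eq_left_iff_le.2 h).symm
      _ = _ := by rw [hz]; ring
  · rw [hw]; ring
  · rw [← hd 1]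
    exact (add_mul_eq_left hle_one _ (s * s)).symm.trans (by ring)
  · rw [hs]; ring
  · exact (hd 2).symm

theorem exists_lower_triangular_eq_mul_transpose {k : L}
    (hk : A 0 1 = d 0 * d 1 * (w * s) * k) :
    ∃ C : Matrix (Fin 3) (Fin 3) L, (∀ i j : Fin 3, i < j → C i j = 0) ∧ A = C * Cᵀ := by
  let C := !![d 0, 0, 0; d 1 * (w * s * k), d 1, 0; d 2 * w, d 2 * s, d 2]
  refine ⟨C, ?_, hA.ext_fin_three (isSymm_mul_transpose_self C) ?_ ?_ ?_ ?_ ?_ ?_⟩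
  · intro i j hij
    fin_cases i <;> fin_cases j <;> first | rfl | exact absurd hij (by decide)
  all_goals simp only [C, mul_apply, transpose_apply, Fin.sum_univ_three, of_apply, cons_val',
      cons_val_fin_one, cons_val, cons_val_zero, cons_val_one, Fin.isValue, mul_zero, zero_mul,
      add_zero]
  · exact (hd 0).symm
  · rw [hk]; ring
  · rw [hw]; ring
  · rw [← hd 1]
    exact (add_mul_eq_left hle_one _ (w * s * k * (w * s * k))).symm.trans (by ring)
  · rw [hs]
    exact (add_mul_eq_left hle_one _ (w * w * k)).symm.trans (by ring)
  · rw [← hd 2]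
    exact (add_mul_eq_left hle_one _ (w * w + s * s)).symm.trans (by ring)

end ThreeByThree
end Incline

theorem stmt_16_general {L : Type*} [CommSemiring L]
    (habs : ∀ a b : L, a + a * b = a)
    (hLI : ∀ x y : L, x + y = y → ∃ z : L, x = y * z)
    (hsq : ∀ x : L, ∃! c : L, c * c = x)
    (htot : ∀ x y : L, x + y = y ∨ y + x = x)
    (A : Matrix (Fin 3) (Fin 3) L)
    (hcp : ∃ m : ℕ, ∃ B : Matrix (Fin 3) (Fin m) L, A = B * Bᵀ) :
    (∃ C : Matrix (Fin 3) (Fin 3) L, (∀ i j : Fin 3, i < j → C i j = 0) ∧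
        A = C * Cᵀ) ∨
    (∃ U : Matrix (Fin 3) (Fin 3) L, (∀ i j : Fin 3, j < i → U i j = 0) ∧
        A = U * Uᵀ) := by
  -- `IdemSemiring.ofSemiring` orders `L` by `x ≤ y ↔ x + y = y`,
  -- so `hLI` and `htot` apply as stated.
  let _ : IdemCommSemiring L :=
    { ‹CommSemiring L›, IdemSemiring.ofSemiring fun a => by simpa using habs a 1 with }
  have hle_one : ∀ a : L, a ≤ 1 := fun a => (add_comm a 1).trans (by simpa using habs 1 a)
  have hinj : Injective fun x : L => x * x := fun x y hxy => (hsq (y * y)).unique hxy rfl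
  obtain ⟨m, B, rfl⟩ := hcp
  choose d hd using fun i => (hsq ((B * Bᵀ) i i)).exists
  have hle := Incline.mul_transpose_self_apply_le htot hinj B hd
  obtain ⟨z, hz⟩ := hLI _ _ (hle 0 1)
  obtain ⟨w, hw⟩ := hLI _ _ (hle 0 2)
  obtain ⟨s, hs⟩ := hLI _ _ (hle 1 2)
  have hsymm : (B * Bᵀ).IsSymm := by rw [IsSymm, transpose_mul, transpose_transpose]
  rcases htot (d 0 * d 1 * (w * s)) ((B * Bᵀ) 0 1) with h | h
  · exact .inr <| Incline.exists_upper_triangular_eq_mul_transpose hle_one hsymm hd hw hs hz h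
  · obtain ⟨k, hk⟩ := hLI _ _ h
    exact .inl <| Incline.exists_lower_triangular_eq_mul_transpose hle_one hsymm hd hw hs hk

/-- Every 3×3 completely positive matrix over a totally ordered
normal incline is LU-completely positive or UL-completely positive (or both). -/
theorem stmt_16 {L : Type*} [CommSemiring L]
    (hidem : ∀ a : L, a + a = a)
    (habs : ∀ a b : L, a + a * b = a)
    (hLI : ∀ x y : L, x + y = y → ∃ z : L, x = y * z)
    (hsq : ∀ x : L, ∃! c : L, c * c = x)
    (hAG : ∀ x y : L, x * y + (x * x + y * y) = x * x + y * y)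
    (htot : ∀ x y : L, x + y = y ∨ y + x = x)
    (A : Matrix (Fin 3) (Fin 3) L)
    (hcp : ∃ m : ℕ, ∃ B : Matrix (Fin 3) (Fin m) L, A = B * Bᵀ) :
    (∃ C : Matrix (Fin 3) (Fin 3) L, (∀ i j : Fin 3, i < j → C i j = 0) ∧
        A = C * Cᵀ) ∨
    (∃ U : Matrix (Fin 3) (Fin 3) L, (∀ i j : Fin 3, j < i → U i j = 0) ∧
        A = U * Uᵀ) :=
  stmt_16_general habs hLI hsq htot A hcp
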